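/- arXiv:2603.18730 — 2 statements merged into one kernel-verified Lean document; each statement's English description precedes it below -/
import Mathlib

section
/- For the expected total gain objective ETG(b) = Σ_{m=1}^{M} π_m · Σ_{i=1}^{m} Σ_{j=1}^{S} w_j · b_{ij}, if a feasible solution b has NightGain(i) < NightGain(i+1) for some night i (where NightGain(i) = Σ_j w_j·b_{ij}), then the solution b' obtained by swapping the schedules of nights i and i+1 is feasible and satisfies ETG(b') ≥ ETG(b). -/
/-!
Swapping nights `i` and `i + 1` leaves every prefix sum of night gains over nights `1, …, m`
unchanged when `m > i` (both nights are counted) and can only increase it when `m ≤ i` (night `i`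
now carries the larger gain of night `i + 1`, which was not counted). Since the expected total
gain is a nonnegative combination of these prefix sums, it does not decrease.
-/

open Finset Equiv

theorem Finset.sum_comp_swap_of_mem {α β : Type*} [DecidableEq α] [AddCommMonoid β]
    (s : Finset α) (f : α → β) {a b : α} (ha : a ∈ s) (hb : b ∈ s) :
    ∑ x ∈ s, f (swap a b x) = ∑ x ∈ s, f x :=
  (swap a b).sum_comp s f fun x hx => by
    rcases (swap_apply_ne_self_iff.mp hx).2 with rfl | rfl <;> assumption

theorem sum_Icc_le_sum_Icc_comp_swap_succ {β : Type*} [AddCommMonoid β] [PartialOrder β]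
    [IsOrderedAddMonoid β] (f : ℕ → β) {i : ℕ} (hi : 1 ≤ i) (hf : f i ≤ f (i + 1)) (m : ℕ) :
    ∑ k ∈ Icc 1 m, f k ≤ ∑ k ∈ Icc 1 m, f (swap i (i + 1) k) := by
  rcases le_or_gt m i with hmi | him
  · refine sum_le_sum fun k hk => ?_
    have hk_ne : k ≠ i + 1 := by
      have := (mem_Icc.mp hk).2
      omega
    rcases eq_or_ne k i with rfl | hki
    · rwa [swap_apply_left]
    · rw [swap_apply_of_ne_of_ne hki hk_ne]
  · exact (sum_comp_swap_of_mem _ f (mem_Icc.mpr ⟨hi, him.le⟩) (mem_Icc.mpr ⟨by omega, him⟩)).ge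

theorem swap_increasing_nights_improves_general
    (M S : ℕ) (π w : ℕ → ℝ)
    (hπ : ∀ m, 0 ≤ π m)
    (Feasible : (ℕ → ℕ → Bool) → Prop)
    -- intra-night feasibility is identical across nights, so permuting nights
    -- preserves feasibility
    (hperm : ∀ (b : ℕ → ℕ → Bool) (σ : Equiv.Perm ℕ),
      Feasible b → Feasible (fun i j => b (σ i) j))
    (b : ℕ → ℕ → Bool) (hb : Feasible b)
    (NightGain : (ℕ → ℕ → Bool) → ℕ → ℝ)
    (hNG : ∀ b' i, NightGain b' i =
      ∑ j ∈ Finset.Icc 1 S, w j * (if b' i j then (1:ℝ) else 0))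
    (ETG : (ℕ → ℕ → Bool) → ℝ)
    (hETG : ∀ b', ETG b' =
      ∑ m ∈ Finset.Icc 1 M, π m * ∑ i ∈ Finset.Icc 1 m, NightGain b' i)
    (i : ℕ) (hi1 : 1 ≤ i)
    (hlt : NightGain b i < NightGain b (i + 1)) :
    Feasible (fun i' j => b (Equiv.swap i (i + 1) i') j) ∧
      ETG b ≤ ETG (fun i' j => b (Equiv.swap i (i + 1) i') j) := by
  have hgain : ∀ k, NightGain (fun i' j => b (swap i (i + 1) i') j) k
      = NightGain b (swap i (i + 1) k) := fun k => by rw [hNG, hNG]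
  refine ⟨hperm b _ hb, ?_⟩
  simp only [hETG, hgain]
  exact sum_le_sum fun m _ =>
    mul_le_mul_of_nonneg_left (sum_Icc_le_sum_Icc_comp_swap_succ _ hi1 hlt.le m) (hπ m)

/-- swapping two adjacent nights where the gain increases yields a
feasible solution with at least as large an expected total gain. -/
theorem swap_increasing_nights_improves
    (M S : ℕ) (π w : ℕ → ℝ)
    (hπ : ∀ m, 0 ≤ π m) (hw : ∀ j, 0 ≤ w j)
    (Feasible : (ℕ → ℕ → Bool) → Prop)
    -- intra-night feasibility is identical across nights, so permuting nights
    -- preserves feasibility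
    (hperm : ∀ (b : ℕ → ℕ → Bool) (σ : Equiv.Perm ℕ),
      Feasible b → Feasible (fun i j => b (σ i) j))
    (b : ℕ → ℕ → Bool) (hb : Feasible b)
    (NightGain : (ℕ → ℕ → Bool) → ℕ → ℝ)
    (hNG : ∀ b' i, NightGain b' i =
      ∑ j ∈ Finset.Icc 1 S, w j * (if b' i j then (1:ℝ) else 0))
    (ETG : (ℕ → ℕ → Bool) → ℝ)
    (hETG : ∀ b', ETG b' =
      ∑ m ∈ Finset.Icc 1 M, π m * ∑ i ∈ Finset.Icc 1 m, NightGain b' i)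
    (i : ℕ) (hi1 : 1 ≤ i) (hiM : i + 1 ≤ M)
    (hlt : NightGain b i < NightGain b (i + 1)) :
    Feasible (fun i' j => b (Equiv.swap i (i + 1) i') j) ∧
      ETG b ≤ ETG (fun i' j => b (Equiv.swap i (i + 1) i') j) :=
  swap_increasing_nights_improves_general M S π w hπ Feasible hperm b hb NightGain hNG ETG hETG i
    hi1 hlt
end

section
/- There exists an instance of the telescope scheduling problem with 3 nights and 4 observations on which the greedy heuristic (scheduling each night optimally as if it were the last, using remaining observations) is not optimal for the expected total gain: concretely, with observations A (r=0,d=3,p=2,w=1), B (r=1,d=3,p=2,w=1), C (r=0,d=2,p=1,w=2), D (r=1,d=3,p=1,w=2), the greedy solution schedules {C,D} night 1 (gain 4), then one of A,B per night (gains 1,1), while the alternative solution scheduling {A,D} night 1 (gain 3), {B,C} night 2 (gain 3) achieves cumulative gain 6 > 5 after two nights; hence if π = (0,0,1,0) the alternative strictly beats the greedy. -/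
/-! Counterexample instance: stars A,B,C,D = 0,1,2,3 with
A (r=0,d=3,p=2,w=1), B (r=1,d=3,p=2,w=1), C (r=0,d=2,p=1,w=2), D (r=1,d=3,p=1,w=2). -/

def rel : Fin 4 → ℕ := ![0, 1, 0, 1]
def dl  : Fin 4 → ℕ := ![3, 3, 2, 3]
def pt  : Fin 4 → ℕ := ![2, 2, 1, 1]
def wt  : Fin 4 → ℕ := ![1, 1, 2, 2]

/-- A single-night schedule gives each observation an optional integer start
time, within its time window and with pairwise disjoint occupied intervals. -/
def NightFeasible (s : Fin 4 → Option ℕ) : Prop :=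
  (∀ j t, s j = some t → rel j ≤ t ∧ t + pt j ≤ dl j) ∧
  (∀ j k tj tk, j ≠ k → s j = some tj → s k = some tk →
    tj + pt j ≤ tk ∨ tk + pt k ≤ tj)

/-- The gain of a night: sum of the weights of the observations scheduled. -/
def nightGain (s : Fin 4 → Option ℕ) : ℕ :=
  ∑ j : Fin 4, if (s j).isSome then wt j else 0

/-- Greedy: night 1 = {C at 0, D at 1}, night 2 = {A at 0}. -/
def greedy1 : Fin 4 → Option ℕ := ![none, none, some 0, some 1]
def greedy2 : Fin 4 → Option ℕ := ![some 0, none, none, none]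
/-- Alternative: night 1 = {A at 0, D at 2}, night 2 = {B at 1, C at 0}. -/
def alt1 : Fin 4 → Option ℕ := ![some 0, none, none, some 2]
def alt2 : Fin 4 → Option ℕ := ![none, some 1, some 0, none]

/-! All deadlines are at most 3, so the observations of one night occupy disjoint subintervals
of `[0, 3)` and their processing times sum to at most 3. Under that capacity no set of
observations has weight more than 4: weight 5 needs C, D and one of A, B, i.e. processing
time 4. So the greedy first night {C, D} is optimal, after which only one of A, B fits per
night, while the alternative pairs A with D and B with C. -/

theorem Finset.sum_le_of_pairwise_disjoint_Ico {ι : Type*} (S : Finset ι) (t p : ι → ℕ)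
    (T : ℕ) (hfit : ∀ j ∈ S, t j + p j ≤ T)
    (hdisj : ∀ j ∈ S, ∀ k ∈ S, j ≠ k → t j + p j ≤ t k ∨ t k + p k ≤ t j) :
    ∑ j ∈ S, p j ≤ T := by
  set I : ι → Finset ℕ := fun j => Finset.Ico (t j) (t j + p j)
  have hpair : (S : Set ι).PairwiseDisjoint I := by
    intro j hj k hk hjk
    rw [Function.onFun, Finset.disjoint_left]
    intro x hxj hxk
    simp only [I, Finset.mem_Ico] at hxj hxk
    have := hdisj j hj k hk hjk
    omega
  have hsub : S.biUnion I ⊆ Finset.range T := by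
    intro x hx
    obtain ⟨j, hj, hxj⟩ := Finset.mem_biUnion.1 hx
    simp only [I, Finset.mem_Ico] at hxj
    have := hfit j hj
    exact Finset.mem_range.2 (by omega)
  calc ∑ j ∈ S, p j = ∑ j ∈ S, (I j).card := by simp [I]
    _ = (S.biUnion I).card := (Finset.card_biUnion hpair).symm
    _ ≤ T := by simpa using Finset.card_le_card hsub

def scheduled (s : Fin 4 → Option ℕ) : Finset (Fin 4) :=
  Finset.univ.filter fun j => (s j).isSome

theorem nightGain_eq_sum_scheduled (s : Fin 4 → Option ℕ) :
    nightGain s = ∑ j ∈ scheduled s, wt j :=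
  (Finset.sum_filter _ _).symm

theorem NightFeasible.sum_pt_scheduled_le {s : Fin 4 → Option ℕ} (hs : NightFeasible s) :
    ∑ j ∈ scheduled s, pt j ≤ 3 := by
  have hsome : ∀ j ∈ scheduled s, s j = some ((s j).getD 0) := by
    intro j hj
    obtain ⟨t, ht⟩ := Option.isSome_iff_exists.1 (Finset.mem_filter.1 hj).2
    simp [ht]
  have hdl : ∀ j, dl j ≤ 3 := by decide
  refine Finset.sum_le_of_pairwise_disjoint_Ico _ (fun j => (s j).getD 0) pt 3 ?_ ?_
  · intro j hj
    exact (hs.1 j _ (hsome j hj)).2.trans (hdl j)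
  · intro j hj k hk hjk
    exact hs.2 j k _ _ hjk (hsome j hj) (hsome k hk)

theorem sum_wt_le_of_sum_pt_le :
    ∀ S : Finset (Fin 4), ∑ j ∈ S, pt j ≤ 3 → ∑ j ∈ S, wt j ≤ 4 := by
  decide

theorem NightFeasible.nightGain_le {s : Fin 4 → Option ℕ} (hs : NightFeasible s) :
    nightGain s ≤ 4 :=
  nightGain_eq_sum_scheduled s ▸ sum_wt_le_of_sum_pt_le _ hs.sum_pt_scheduled_le

-- Bounded quantifiers over `Option` make the right-hand side decidable.
theorem nightFeasible_iff_forall_mem (s : Fin 4 → Option ℕ) : NightFeasible s ↔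
    (∀ j, ∀ t ∈ s j, rel j ≤ t ∧ t + pt j ≤ dl j) ∧
    (∀ j k, j ≠ k → ∀ tj ∈ s j, ∀ tk ∈ s k, tj + pt j ≤ tk ∨ tk + pt k ≤ tj) := by
  simp only [NightFeasible, Option.mem_def]
  grind

/-- the greedy heuristic is not optimal for the expected total
gain on this instance. All four nights are feasible, each observation is used
at most once in each two-night solution, the greedy first night is single-night
optimal (gain 4, the maximum over all feasible nights), yet with
π = (0,0,1,0) (exactly two nights observable) the greedy cumulative gain 5 is
strictly beaten by the alternative's cumulative gain 6. -/
theorem greedy_not_optimal :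
    NightFeasible greedy1 ∧ NightFeasible greedy2 ∧
    NightFeasible alt1 ∧ NightFeasible alt2 ∧
    (∀ j, ¬((greedy1 j).isSome ∧ (greedy2 j).isSome)) ∧
    (∀ j, ¬((alt1 j).isSome ∧ (alt2 j).isSome)) ∧
    nightGain greedy1 = 4 ∧
    (∀ s, NightFeasible s → nightGain s ≤ 4) ∧
    nightGain greedy1 + nightGain greedy2 = 5 ∧
    nightGain alt1 + nightGain alt2 = 6 ∧
    nightGain greedy1 + nightGain greedy2 <
      nightGain alt1 + nightGain alt2 := by
  refine ⟨?_, ?_, ?_, ?_, by decide, by decide, by decide, fun _ hs => hs.nightGain_le,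
    by decide, by decide, by decide⟩ <;>
  exact (nightFeasible_iff_forall_mem _).2 (by decide)
end
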